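/- Consider minimizing u1 + u2 + u3 over u1, u2, u3 ≥ 0 subject to u1·d1 + u2·d2 + u3·d3 = F for a nonzero target F ∈ ℝ². Every optimal solution has at least one uᵢ equal to zero (at most two thrusters are active). -/

import Mathlib

noncomputable def d : Fin 3 → EuclideanSpace ℝ (Fin 2) :=
  ![(WithLp.toLp 2 ![1, 0] : EuclideanSpace ℝ (Fin 2)),
    (WithLp.toLp 2 ![-(1/2), Real.sqrt 3 / 2] : EuclideanSpace ℝ (Fin 2)),
    (WithLp.toLp 2 ![-(1/2), -(Real.sqrt 3 / 2)] : EuclideanSpace ℝ (Fin 2))]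

lemma d_sum_zero : d 0 + d 1 + d 2 = 0 := by
  ext x
  fin_cases x <;> simp [d] <;> ring

theorem stmt9 (F : EuclideanSpace ℝ (Fin 2)) (hF : F ≠ 0)
    (u : Fin 3 → ℝ) (hu : ∀ i, 0 ≤ u i) (hfeas : ∑ i, u i • d i = F)
    (hopt : (∑ i, u i) =
      sInf {S : ℝ | ∃ w : Fin 3 → ℝ, (∀ i, 0 ≤ w i) ∧ (∑ i, w i • d i = F) ∧ S = ∑ i, w i}) :
    ∃ i, u i = 0 := by
  by_contra h
  push_neg at h
  have hpos : ∀ i, 0 < u i := fun i => lt_of_le_of_ne (hu i) (Ne.symm (h i))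
  set m : ℝ := min (u 0) (min (u 1) (u 2)) with hm
  have hmpos : 0 < m := lt_min (hpos 0) (lt_min (hpos 1) (hpos 2))
  have hmle : ∀ i, m ≤ u i := by
    intro i
    fin_cases i
    · exact min_le_left _ _
    · exact le_trans (min_le_right _ _) (min_le_left _ _)
    · exact le_trans (min_le_right _ _) (min_le_right _ _)
  set w : Fin 3 → ℝ := fun i => u i - m with hw
  have hwpos : ∀ i, 0 ≤ w i := fun i => sub_nonneg.mpr (hmle i)
  have hwfeas : ∑ i, w i • d i = F := by
    have : ∑ i, w i • d i = (∑ i, u i • d i) - m • (d 0 + d 1 + d 2) := by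
      simp [hw, Fin.sum_univ_three, sub_smul, smul_add]
    rw [this, d_sum_zero, smul_zero, sub_zero, hfeas]
  have hmem : (∑ i, w i) ∈ {S : ℝ | ∃ w : Fin 3 → ℝ, (∀ i, 0 ≤ w i) ∧
      (∑ i, w i • d i = F) ∧ S = ∑ i, w i} := ⟨w, hwpos, hwfeas, rfl⟩
  have hbdd : BddBelow {S : ℝ | ∃ w : Fin 3 → ℝ, (∀ i, 0 ≤ w i) ∧
      (∑ i, w i • d i = F) ∧ S = ∑ i, w i} := by
    refine ⟨0, fun S hS => ?_⟩
    obtain ⟨v, hv, -, rfl⟩ := hS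
    exact Finset.sum_nonneg fun i _ => hv i
  have hle : sInf {S : ℝ | ∃ w : Fin 3 → ℝ, (∀ i, 0 ≤ w i) ∧
      (∑ i, w i • d i = F) ∧ S = ∑ i, w i} ≤ ∑ i, w i := csInf_le hbdd hmem
  have hlt : (∑ i, w i) < ∑ i, u i := by
    simp [hw, Fin.sum_univ_three]
    linarith
  linarith [hopt ▸ hle]
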